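/- Let Z be a random variable on a discrete probability space with finite range 𝒵, let ρ be a random state on a finite-dimensional complex Hilbert space defined on the same probability space, and let F be a random function with domain 𝒵 and finite range which is independent of the pair (Z, ρ). Then d(F(Z) | {F} ⊗ ρ) = E_F[ d(F(Z) | ρ) ], where for each fixed function f the quantity d(f(Z) | ρ) is the non-uniformity of f(Z) given ρ, and the expectation is over the distribution of F. -/

import Mathlib

open Matrix
open scoped Kronecker ComplexOrder

noncomputable section

/-- A density operator: positive semidefinite with trace one. -/
def IsDensityOp {d : Type*} [Fintype d] [DecidableEq d] (ρ : Matrix d d ℂ) : Prop :=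
  ρ.PosSemidef ∧ ρ.trace = 1

/-- The operator absolute value `|A| = (A Aᴴ)^(1/2)`. -/
noncomputable def matAbs {d : Type*} [Fintype d] [DecidableEq d] (A : Matrix d d ℂ) :
    Matrix d d ℂ :=
  ((Matrix.posSemidef_self_mul_conjTranspose A).1.eigenvectorUnitary : Matrix d d ℂ) *
    Matrix.diagonal ((↑) ∘ Real.sqrt ∘ (Matrix.posSemidef_self_mul_conjTranspose A).1.eigenvalues) *
    (star (Matrix.posSemidef_self_mul_conjTranspose A).1.eigenvectorUnitary : Matrix d d ℂ)

/-- Trace distance `δ(ρ,σ) = (1/2) tr|ρ-σ|`. -/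
noncomputable def traceDist {d : Type*} [Fintype d] [DecidableEq d]
    (ρ σ : Matrix d d ℂ) : ℝ :=
  (1 / 2) * (matAbs (ρ - σ)).trace.re

/-- Squared Hilbert-Schmidt distance `Δ(ρ,σ) = tr((ρ-σ)²)`. -/
noncomputable def hsDistSq {d : Type*} [Fintype d] [DecidableEq d]
    (ρ σ : Matrix d d ℂ) : ℝ :=
  ((ρ - σ) * (ρ - σ)).trace.re

/-- Expectation of a random state. -/
noncomputable def expState {Ω d : Type*} [Fintype d]
    (P : Ω → ℝ) (ρ : Ω → Matrix d d ℂ) : Matrix d d ℂ :=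
  ∑' ω, P ω • ρ ω

/-- Probability of an event. -/
noncomputable def prEvent {Ω : Type*} (P : Ω → ℝ) (E : Set Ω) : ℝ :=
  ∑' ω, E.indicator P ω

/-- Conditional expectation `[ρ | E]` of a random state given an event. -/
noncomputable def condExpState {Ω d : Type*} [Fintype d]
    (P : Ω → ℝ) (ρ : Ω → Matrix d d ℂ) (E : Set Ω) : Matrix d d ℂ :=
  (prEvent P E)⁻¹ • ∑' ω, E.indicator (fun ω => P ω • ρ ω) ω

/-- The classical state `|x⟩⟨x|`. -/
noncomputable def classicalState {𝒳 : Type*} [Fintype 𝒳] [DecidableEq 𝒳] (x : 𝒳) :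
    Matrix 𝒳 𝒳 ℂ :=
  Matrix.single x x 1

/-- The fully mixed state on `𝒳`. -/
noncomputable def uniformState (𝒳 : Type*) [Fintype 𝒳] [DecidableEq 𝒳] : Matrix 𝒳 𝒳 ℂ :=
  (Fintype.card 𝒳 : ℂ)⁻¹ • (1 : Matrix 𝒳 𝒳 ℂ)

/-- Non-uniformity `d(X|ρ) = δ([{X} ⊗ ρ], [{U}] ⊗ [ρ])`. -/
noncomputable def nonUnif {Ω 𝒳 d : Type*} [Fintype 𝒳] [DecidableEq 𝒳]
    [Fintype d] [DecidableEq d]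
    (P : Ω → ℝ) (X : Ω → 𝒳) (ρ : Ω → Matrix d d ℂ) : ℝ :=
  traceDist (expState P (fun ω => classicalState (X ω) ⊗ₖ ρ ω))
    (uniformState 𝒳 ⊗ₖ expState P ρ)

/-- `D(X|ρ) = Δ([{X} ⊗ ρ], [{U}] ⊗ [ρ])`. -/
noncomputable def DNonUnif {Ω 𝒳 d : Type*} [Fintype 𝒳] [DecidableEq 𝒳]
    [Fintype d] [DecidableEq d]
    (P : Ω → ℝ) (X : Ω → 𝒳) (ρ : Ω → Matrix d d ℂ) : ℝ :=
  hsDistSq (expState P (fun ω => classicalState (X ω) ⊗ₖ ρ ω))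
    (uniformState 𝒳 ⊗ₖ expState P ρ)

/-- Rényi entropy of order 0: `log₂ rank ρ`. -/
noncomputable def renyiS0 {d : Type*} [Fintype d] [DecidableEq d] (ρ : Matrix d d ℂ) : ℝ :=
  Real.logb 2 (ρ.rank)

/-- Rényi entropy of order 2: `-log₂ tr(ρ²)`. -/
noncomputable def renyiS2 {d : Type*} [Fintype d] [DecidableEq d] (ρ : Matrix d d ℂ) : ℝ :=
  -Real.logb 2 ((ρ * ρ).trace.re)

/-- Maximal eigenvalue of a Hermitian matrix. -/
noncomputable def lambdaMax {d : Type*} [Fintype d] [DecidableEq d] (ρ : Matrix d d ℂ) : ℝ :=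
  if h : ρ.IsHermitian then ⨆ i, h.eigenvalues i else 0

/-- Von Neumann entropy `S(ρ) = -tr(ρ log₂ ρ)` (in bits). -/
noncomputable def vnEntropy {d : Type*} [Fintype d] [DecidableEq d] (ρ : Matrix d d ℂ) : ℝ :=
  if h : ρ.IsHermitian then -∑ i, h.eigenvalues i * Real.logb 2 (h.eigenvalues i) else 0

/-- Smooth Rényi entropy of order 0. -/
noncomputable def smoothS0 {d : Type*} [Fintype d] [DecidableEq d]
    (ε : ℝ) (ρ : Matrix d d ℂ) : ℝ :=
  sInf {x : ℝ | ∃ σ : Matrix d d ℂ,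
    IsDensityOp σ ∧ traceDist ρ σ ≤ ε ∧ x = Real.logb 2 (σ.rank)}

/-- Smooth Rényi entropy of order ∞. -/
noncomputable def smoothSinf {d : Type*} [Fintype d] [DecidableEq d]
    (ε : ℝ) (ρ : Matrix d d ℂ) : ℝ :=
  sSup {x : ℝ | ∃ σ : Matrix d d ℂ,
    IsDensityOp σ ∧ traceDist ρ σ ≤ ε ∧ x = -Real.logb 2 (lambdaMax σ)}


/-! Conditioned on `F = g`, the joint operator `[{F(Z)} ⊗ {F} ⊗ ρ]` and the reference operator
`[{U}] ⊗ [{F} ⊗ ρ]` live in the block of the `{F}` register indexed by `g`, where they equal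
`Pr[F = g] • [{g(Z)} ⊗ ρ]` and `Pr[F = g] • ([{U}] ⊗ [ρ])`; this factorisation is where the
independence of `F` from `(Z, ρ)` enters. The operator absolute value, and hence the trace
distance, splits over orthogonal blocks and is positively homogeneous, so the left-hand side is
`∑ g, Pr[F = g] * d(g(Z) | ρ) = E_F[d(F(Z) | ρ)]`. -/

open scoped MatrixOrder

section matAbs

variable {n : Type*} [Fintype n] [DecidableEq n]

lemma matAbs_eq_sqrt (A : Matrix n n ℂ) : matAbs A = CFC.sqrt (A * Aᴴ) := by
  have hA := posSemidef_self_mul_conjTranspose A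
  rw [CFC.sqrt_eq_cfc, cfc_nnreal_eq_real _ (A * Aᴴ), hA.1.cfc_eq]
  simp only [matAbs, IsHermitian.cfc, Unitary.conjStarAlgAut_apply]
  congr 3
  funext i
  simp [max_eq_left (hA.eigenvalues_nonneg i)]

lemma posSemidef_matAbs (A : Matrix n n ℂ) : (matAbs A).PosSemidef := by
  rw [matAbs_eq_sqrt]
  exact (CFC.sqrt_nonneg _).posSemidef

lemma matAbs_mul_self (A : Matrix n n ℂ) : matAbs A * matAbs A = A * Aᴴ := by
  rw [matAbs_eq_sqrt]
  exact CFC.sqrt_mul_sqrt_self _ (posSemidef_self_mul_conjTranspose A).nonneg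

lemma matAbs_eq_of_mul_self {A B : Matrix n n ℂ} (hB : B.PosSemidef) (h : B * B = A * Aᴴ) :
    matAbs A = B := by
  rw [matAbs_eq_sqrt]
  exact CFC.sqrt_unique h hB.nonneg

lemma matAbs_smul {c : ℝ} (hc : 0 ≤ c) (A : Matrix n n ℂ) : matAbs (c • A) = c • matAbs A := by
  refine matAbs_eq_of_mul_self ((posSemidef_matAbs A).smul hc) ?_
  rw [conjTranspose_smul, star_trivial, smul_mul_smul_comm, smul_mul_smul_comm, matAbs_mul_self]

lemma matAbs_submatrix_equiv {m : Type*} [Fintype m] [DecidableEq m] (A : Matrix n n ℂ)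
    (e : m ≃ n) : matAbs (A.submatrix e e) = (matAbs A).submatrix e e := by
  refine matAbs_eq_of_mul_self ((posSemidef_matAbs A).submatrix e) ?_
  rw [conjTranspose_submatrix, submatrix_mul_equiv, submatrix_mul_equiv, matAbs_mul_self]

variable {T : Type*} [Fintype T] [DecidableEq T]

lemma posSemidef_blockDiagonal {M : T → Matrix n n ℂ} (hM : ∀ g, (M g).PosSemidef) :
    (blockDiagonal M).PosSemidef := by
  choose S hS using fun g => CStarAlgebra.nonneg_iff_eq_star_mul_self.mp (hM g).nonneg
  have hM_eq : blockDiagonal M = (blockDiagonal S)ᴴ * blockDiagonal S := by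
    rw [blockDiagonal_conjTranspose, ← blockDiagonal_mul]
    exact congrArg _ (funext hS)
  rw [hM_eq]
  exact posSemidef_conjTranspose_mul_self _

lemma matAbs_blockDiagonal (C : T → Matrix n n ℂ) :
    matAbs (blockDiagonal C) = blockDiagonal fun g => matAbs (C g) := by
  refine matAbs_eq_of_mul_self (posSemidef_blockDiagonal fun g => posSemidef_matAbs (C g)) ?_
  rw [blockDiagonal_conjTranspose, ← blockDiagonal_mul, ← blockDiagonal_mul]
  simp only [matAbs_mul_self]

end matAbs

lemma traceDist_smul {n : Type*} [Fintype n] [DecidableEq n] {c : ℝ} (hc : 0 ≤ c)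
    (A B : Matrix n n ℂ) : traceDist (c • A) (c • B) = c * traceDist A B := by
  rw [traceDist, traceDist, ← smul_sub, matAbs_smul hc, trace_smul, Complex.real_smul,
    Complex.re_ofReal_mul]
  ring

section blockDiagonalMid

variable {m n T : Type*}

variable (m n T) in
def midEquiv : m × (T × n) ≃ (m × n) × T :=
  (Equiv.prodCongr (Equiv.refl m) (Equiv.prodComm T n)).trans (Equiv.prodAssoc m n T).symm

variable [DecidableEq T]

def blockDiagonalMid :
    (T → Matrix (m × n) (m × n) ℂ) →ₗ[ℝ] Matrix (m × (T × n)) (m × (T × n)) ℂ where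
  toFun C := (blockDiagonal C).submatrix (midEquiv m n T) (midEquiv m n T)
  map_add' C C' := by rw [blockDiagonal_add]; rfl
  map_smul' c C := by rw [blockDiagonal_smul]; rfl

lemma blockDiagonalMid_apply (C : T → Matrix (m × n) (m × n) ℂ) (s s' : m) (k k' : T)
    (j j' : n) :
    blockDiagonalMid C (s, k, j) (s', k', j') = if k = k' then C k (s, j) (s', j') else 0 := by
  simp [blockDiagonalMid, midEquiv, blockDiagonal_apply]

variable [Fintype T]

lemma kronecker_classicalState_kronecker (A : Matrix m m ℂ) (g : T) (R : Matrix n n ℂ) :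
    A ⊗ₖ (classicalState g ⊗ₖ R) = blockDiagonalMid (Pi.single g (A ⊗ₖ R)) := by
  ext ⟨s, k, j⟩ ⟨s', k', j'⟩
  rw [blockDiagonalMid_apply]
  by_cases hk : k = g
  · subst hk
    by_cases hk' : k' = k <;> simp [classicalState, hk', Ne.symm]
  · simp [classicalState, hk, Ne.symm hk]

variable [Fintype m] [Fintype n]

lemma trace_blockDiagonalMid (C : T → Matrix (m × n) (m × n) ℂ) :
    (blockDiagonalMid C).trace = ∑ g, (C g).trace := by
  rw [← trace_blockDiagonal]
  exact Equiv.sum_comp (midEquiv m n T) fun i => blockDiagonal C i i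

variable [DecidableEq m] [DecidableEq n]

lemma matAbs_blockDiagonalMid (C : T → Matrix (m × n) (m × n) ℂ) :
    matAbs (blockDiagonalMid C) = blockDiagonalMid fun g => matAbs (C g) := by
  simp only [blockDiagonalMid, LinearMap.coe_mk, AddHom.coe_mk]
  rw [matAbs_submatrix_equiv, matAbs_blockDiagonal]

lemma traceDist_blockDiagonalMid (C C' : T → Matrix (m × n) (m × n) ℂ) :
    traceDist (blockDiagonalMid C) (blockDiagonalMid C') = ∑ g, traceDist (C g) (C' g) := by
  simp only [traceDist, ← map_sub, matAbs_blockDiagonalMid, trace_blockDiagonalMid,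
    Complex.re_sum, Finset.mul_sum, Pi.sub_apply]

end blockDiagonalMid

section fiberwise

variable {Ω Ω' T : Type*} [Fintype T]

lemma smul_comp_eq_sum_indicator_smul {M : Type*} [AddCommMonoid M] [Module ℝ M]
    (Q : Ω → ℝ) (f : Ω → T) (h : T → M) (ω : Ω) :
    Q ω • h (f ω) = ∑ g, (f ⁻¹' {g}).indicator Q ω • h g := by
  rw [Fintype.sum_eq_single (f ω) fun g hg => by simp [Set.indicator_of_notMem, Ne.symm hg]]
  simp

lemma tsum_smul_comp_eq_sum_prEvent {M : Type*} [AddCommGroup M] [Module ℝ M]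
    [TopologicalSpace M] [IsTopologicalAddGroup M] [ContinuousSMul ℝ M] [T2Space M]
    {Q : Ω → ℝ} (hQ : Summable Q) (f : Ω → T) (h : T → M) :
    ∑' ω, Q ω • h (f ω) = ∑ g, prEvent Q (f ⁻¹' {g}) • h g := by
  rw [tsum_congr (smul_comp_eq_sum_indicator_smul Q f h),
    Summable.tsum_finsetSum fun g _ => (hQ.indicator _).smul_const _]
  exact Finset.sum_congr rfl fun g _ => (hQ.indicator _).tsum_smul_const _

lemma tsum_prod_mul_smul_eq_sum_prEvent {E : Type*} [NormedAddCommGroup E] [NormedSpace ℝ E]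
    [FiniteDimensional ℝ E] {P : Ω → ℝ} {Q : Ω' → ℝ} (hQ : Summable Q) (f : Ω' → T)
    (v : T → Ω → E) (hv : ∀ g, Summable fun ω => P ω • v g ω) :
    ∑' p : Ω × Ω', (P p.1 * Q p.2) • v (f p.2) p.1
      = ∑ g, prEvent Q (f ⁻¹' {g}) • ∑' ω, P ω • v g ω := by
  -- In finite dimension summability is absolute, which licenses splitting the double sum.
  have hfactor : ∀ g, Summable fun p : Ω × Ω' => (f ⁻¹' {g}).indicator Q p.2 • P p.1 • v g p.1 :=
    fun g => .of_norm <| by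
      simpa only [norm_smul, mul_comm] using
        (summable_norm_iff.2 (hv g)).mul_of_nonneg (hQ.indicator _).norm
          (fun _ => norm_nonneg _) fun _ => norm_nonneg _
  have hsplit : ∀ p : Ω × Ω', (P p.1 * Q p.2) • v (f p.2) p.1
      = ∑ g, (f ⁻¹' {g}).indicator Q p.2 • P p.1 • v g p.1 := fun p => by
    rw [mul_comm, mul_smul, smul_comp_eq_sum_indicator_smul Q f (fun g => P p.1 • v g p.1)]
  rw [tsum_congr hsplit, Summable.tsum_finsetSum fun g _ => hfactor g]
  refine Finset.sum_congr rfl fun g _ => ?_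
  rw [prEvent, tsum_smul_tsum (hQ.indicator _) (hv g) (hfactor g).prod_symm]
  exact (Equiv.prodComm Ω Ω').tsum_eq fun z => (f ⁻¹' {g}).indicator Q z.1 • P z.2 • v g z.2

end fiberwise

lemma summable_of_tsum_ne_zero {ι : Type*} {f : ι → ℝ} (h : ∑' i, f i ≠ 0) : Summable f :=
  by_contra fun hf => h (tsum_eq_zero_of_not_summable hf)

section densityOp

variable {n : Type*} [Fintype n] [DecidableEq n]

lemma IsDensityOp.norm_apply_le_one {ρ : Matrix n n ℂ} (h : IsDensityOp ρ) (i j : n) :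
    ‖ρ i j‖ ≤ 1 := by
  obtain ⟨B, hB⟩ := CStarAlgebra.nonneg_iff_eq_star_mul_self.mp h.1.nonneg
  let v : n → EuclideanSpace ℂ n := fun a => WithLp.toLp 2 fun k => B k a
  have hv : ∀ a b, ρ a b = inner ℂ (v a) (v b) := fun a b => by
    simp [v, hB, mul_apply, EuclideanSpace.inner_eq_star_dotProduct, dotProduct, mul_comm]
  have hnorm : ∀ a, ‖v a‖ ^ 2 = (ρ a a).re := fun a => by
    rw [← inner_self_eq_norm_sq (𝕜 := ℂ), hv]; rfl
  have hdiag : ∀ a, ‖v a‖ ^ 2 ≤ 1 := fun a => by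
    have htr : ∑ b, (ρ b b).re = 1 := by
      simpa [trace, Complex.re_sum] using congrArg Complex.re h.2
    rw [hnorm, ← htr]
    exact Finset.single_le_sum (fun b _ => hnorm b ▸ sq_nonneg _) (Finset.mem_univ a)
  calc ‖ρ i j‖ ≤ ‖v i‖ * ‖v j‖ := hv i j ▸ norm_inner_le_norm _ _
    _ ≤ 1 := by nlinarith [norm_nonneg (v i), norm_nonneg (v j), hdiag i, hdiag j]

lemma isDensityOp_classicalState {𝒳 : Type*} [Fintype 𝒳] [DecidableEq 𝒳] (x : 𝒳) :
    IsDensityOp (classicalState x) := by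
  refine ⟨?_, by simp [classicalState]⟩
  rw [classicalState, ← diagonal_single]
  exact PosSemidef.diagonal (Pi.single_nonneg.2 zero_le_one)

lemma IsDensityOp.kronecker {m : Type*} [Fintype m] [DecidableEq m] {σ : Matrix m m ℂ}
    {ρ : Matrix n n ℂ} (hσ : IsDensityOp σ) (hρ : IsDensityOp ρ) : IsDensityOp (σ ⊗ₖ ρ) :=
  ⟨hσ.1.kronecker hρ.1, by rw [trace_kronecker, hσ.2, hρ.2, one_mul]⟩

end densityOp

section expState

variable {Ω n m : Type*} [Fintype n] {P : Ω → ℝ} {ρ : Ω → Matrix n n ℂ}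

lemma summable_smul_map (hρ : Summable fun ω => P ω • ρ ω)
    (L : Matrix n n ℂ →ₗ[ℝ] Matrix m m ℂ) : Summable fun ω => P ω • L (ρ ω) := by
  simpa only [map_smul, LinearMap.coe_toContinuousLinearMap'] using
    L.toContinuousLinearMap.summable hρ

lemma expState_map [Fintype m] (hρ : Summable fun ω => P ω • ρ ω)
    (L : Matrix n n ℂ →ₗ[ℝ] Matrix m m ℂ) : expState P (fun ω => L (ρ ω)) = L (expState P ρ) := by
  simp only [expState, ← map_smul]
  exact (L.toContinuousLinearMap.map_tsum hρ).symm

lemma kronecker_expState {l : Type*} [Fintype l] (A : Matrix l l ℂ)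
    (hρ : Summable fun ω => P ω • ρ ω) : A ⊗ₖ expState P ρ = expState P fun ω => A ⊗ₖ ρ ω :=
  (expState_map hρ (kroneckerBilinear (R := ℝ) A)).symm

end expState

section normed

-- Any norm will do here: it only serves to dominate sums in a finite-dimensional space.
attribute [local instance] Matrix.normedAddCommGroup Matrix.normedSpace

lemma summable_smul_of_isDensityOp {Ω n : Type*} [Fintype n] [DecidableEq n] {P : Ω → ℝ}
    (hP : Summable P) {ρ : Ω → Matrix n n ℂ} (hρ : ∀ ω, IsDensityOp (ρ ω)) :
    Summable fun ω => P ω • ρ ω := by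
  refine .of_norm_bounded hP.abs fun ω => ?_
  rw [norm_smul, Real.norm_eq_abs]
  exact mul_le_of_le_one_right (abs_nonneg _)
    ((norm_le_iff zero_le_one).2 (hρ ω).norm_apply_le_one)

lemma expState_prod_blockDiagonalMid {Ω Ω' m n T : Type*} [Fintype m] [Fintype n] [Fintype T]
    [DecidableEq T] (P : Ω → ℝ) {Q : Ω' → ℝ} (hQ : Summable Q) (f : Ω' → T)
    (N : T → Ω → Matrix (m × n) (m × n) ℂ) (hN : ∀ g, Summable fun ω => P ω • N g ω) :
    expState (fun p : Ω × Ω' => P p.1 * Q p.2)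
        (fun p => blockDiagonalMid (Pi.single (f p.2) (N (f p.2) p.1)))
      = blockDiagonalMid fun g => prEvent Q (f ⁻¹' {g}) • expState P (N g) := by
  let L : T → Matrix (m × n) (m × n) ℂ →ₗ[ℝ] Matrix (m × (T × n)) (m × (T × n)) ℂ :=
    fun g => blockDiagonalMid ∘ₗ LinearMap.single ℝ (fun _ => Matrix (m × n) (m × n) ℂ) g
  have hv : ∀ g, Summable fun ω => P ω • blockDiagonalMid (Pi.single g (N g ω)) :=
    fun g => summable_smul_map (hN g) (L g)
  have hL : ∀ g, ∑' ω, P ω • blockDiagonalMid (Pi.single g (N g ω))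
      = blockDiagonalMid (Pi.single g (expState P (N g))) :=
    fun g => expState_map (hN g) (L g)
  calc _ = ∑ g, prEvent Q (f ⁻¹' {g}) • ∑' ω, P ω • blockDiagonalMid (Pi.single g (N g ω)) :=
        tsum_prod_mul_smul_eq_sum_prEvent hQ f _ hv
    _ = ∑ g, prEvent Q (f ⁻¹' {g}) • blockDiagonalMid (Pi.single g (expState P (N g))) :=
        Finset.sum_congr rfl fun g _ => congrArg _ (hL g)
    _ = _ := by simp only [← map_smul, ← map_sum, ← Pi.single_smul, Finset.univ_sum_single]

end normed

lemma prEvent_nonneg {Ω : Type*} {Q : Ω → ℝ} (hQ : ∀ ω, 0 ≤ Q ω) (E : Set Ω) :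
    0 ≤ prEvent Q E :=
  tsum_nonneg (Set.indicator_nonneg fun ω _ => hQ ω)

section randomFunction

variable {Ω Ω' d : Type*} [Fintype d] [DecidableEq d] {P : Ω → ℝ} {Q : Ω' → ℝ}
  {ρ : Ω → Matrix d d ℂ}

lemma expState_prod_classicalState_apply_kronecker {𝒵 𝒮 : Type*} [Fintype 𝒵] [DecidableEq 𝒵]
    [Fintype 𝒮] [DecidableEq 𝒮] (hP : Summable P) (hQ : Summable Q)
    (hρ : ∀ ω, IsDensityOp (ρ ω)) (X : Ω → 𝒵) (F : Ω' → 𝒵 → 𝒮) :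
    expState (fun p : Ω × Ω' => P p.1 * Q p.2)
        (fun p => classicalState (F p.2 (X p.1)) ⊗ₖ (classicalState (F p.2) ⊗ₖ ρ p.1))
      = blockDiagonalMid fun g =>
          prEvent Q (F ⁻¹' {g}) • expState P fun ω => classicalState (g (X ω)) ⊗ₖ ρ ω := by
  simp only [kronecker_classicalState_kronecker]
  exact expState_prod_blockDiagonalMid P hQ F (fun g ω => classicalState (g (X ω)) ⊗ₖ ρ ω)
    fun g => summable_smul_of_isDensityOp hP
      fun ω => (isDensityOp_classicalState _).kronecker (hρ ω)

lemma kronecker_expState_prod_classicalState_kronecker {l T : Type*} [Fintype l] [Fintype T]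
    [DecidableEq T] (A : Matrix l l ℂ) (hP0 : ∀ ω, 0 ≤ P ω) (hP : Summable P)
    (hQ0 : ∀ ω', 0 ≤ Q ω') (hQ : Summable Q) (hρ : ∀ ω, IsDensityOp (ρ ω)) (F : Ω' → T) :
    A ⊗ₖ expState (fun p : Ω × Ω' => P p.1 * Q p.2) (fun p => classicalState (F p.2) ⊗ₖ ρ p.1)
      = blockDiagonalMid fun g => prEvent Q (F ⁻¹' {g}) • (A ⊗ₖ expState P ρ) := by
  have hρs : Summable fun ω => P ω • ρ ω := summable_smul_of_isDensityOp hP hρ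
  rw [kronecker_expState A (summable_smul_of_isDensityOp (hP.mul_of_nonneg hQ hP0 hQ0)
    fun p => (isDensityOp_classicalState _).kronecker (hρ p.1))]
  simp only [kronecker_classicalState_kronecker]
  rw [expState_prod_blockDiagonalMid P hQ F (fun g ω => A ⊗ₖ ρ ω)
    fun g => summable_smul_map hρs (kroneckerBilinear (R := ℝ) A), kronecker_expState A hρs]

end randomFunction

theorem stmt_5_general {Ω Ω' 𝒵 𝒮 d : Type*}
    [Fintype 𝒵] [DecidableEq 𝒵] [Fintype 𝒮] [DecidableEq 𝒮]
    [Fintype d] [DecidableEq d]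
    (P : Ω → ℝ) (hP : ∀ ω, 0 ≤ P ω) (hP1 : ∑' ω, P ω = 1)
    (Q : Ω' → ℝ) (hQ : ∀ ω', 0 ≤ Q ω') (hQ1 : ∑' ω', Q ω' = 1)
    (Z : Ω → 𝒵) (ρ : Ω → Matrix d d ℂ) (hρ : ∀ ω, IsDensityOp (ρ ω))
    (F : Ω' → 𝒵 → 𝒮) :
    nonUnif (fun p : Ω × Ω' => P p.1 * Q p.2)
        (fun p => F p.2 (Z p.1))
        (fun p => classicalState (F p.2) ⊗ₖ ρ p.1)
      = ∑' ω', Q ω' * nonUnif P (fun ω => F ω' (Z ω)) ρ := by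
  have hPs : Summable P := summable_of_tsum_ne_zero (hP1 ▸ one_ne_zero)
  have hQs : Summable Q := summable_of_tsum_ne_zero (hQ1 ▸ one_ne_zero)
  have hfiber := tsum_smul_comp_eq_sum_prEvent hQs F fun g => nonUnif P (fun ω => g (Z ω)) ρ
  simp only [smul_eq_mul] at hfiber
  rw [nonUnif, expState_prod_classicalState_apply_kronecker hPs hQs hρ Z F,
    kronecker_expState_prod_classicalState_kronecker _ hP hPs hQ hQs hρ F,
    traceDist_blockDiagonalMid, hfiber]
  simp only [traceDist_smul (prEvent_nonneg hQ _), nonUnif]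

/-- **Lemma 4.** `d(F(Z) | {F} ⊗ ρ) = E_F[d(F(Z) | ρ)]`. The random function `F`
lives on its own discrete probability space `(Ω', Q)`, independent of `(Z, ρ)`. -/
theorem stmt_5 {Ω Ω' 𝒵 𝒮 d : Type*} [Countable Ω] [Countable Ω']
    [Fintype 𝒵] [DecidableEq 𝒵] [Fintype 𝒮] [DecidableEq 𝒮]
    [Fintype d] [DecidableEq d]
    (P : Ω → ℝ) (hP : ∀ ω, 0 ≤ P ω) (hP1 : ∑' ω, P ω = 1)
    (Q : Ω' → ℝ) (hQ : ∀ ω', 0 ≤ Q ω') (hQ1 : ∑' ω', Q ω' = 1)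
    (Z : Ω → 𝒵) (ρ : Ω → Matrix d d ℂ) (hρ : ∀ ω, IsDensityOp (ρ ω))
    (F : Ω' → 𝒵 → 𝒮) :
    nonUnif (fun p : Ω × Ω' => P p.1 * Q p.2)
        (fun p => F p.2 (Z p.1))
        (fun p => classicalState (F p.2) ⊗ₖ ρ p.1)
      = ∑' ω', Q ω' * nonUnif P (fun ω => F ω' (Z ω)) ρ :=
  stmt_5_general P hP hP1 Q hQ hQ1 Z ρ hρ F

end
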